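/- arXiv:2107.02610 — 6 statements merged into one kernel-verified Lean document; each statement's English description precedes it below -/
import Mathlib

section
/- Let v_1, ..., v_N ∈ ℂ^d with v_k = a_k + i b_k (a_k, b_k real), and let G = cob{v_1,...,v_N} be their balanced convex hull. Then Re G = co{E(v_1), ..., E(v_N)}, the convex hull of the ellipses E(v_k) = {a_k cos t + b_k sin t : t ∈ ℝ}. -/
noncomputable def ellipse {d : ℕ} (a b : EuclideanSpace ℝ (Fin d)) :
    Set (EuclideanSpace ℝ (Fin d)) :=
  {x | ∃ t : ℝ, x = Real.cos t • a + Real.sin t • b}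

noncomputable def rePart {d : ℕ} (v : Fin d → ℂ) : EuclideanSpace ℝ (Fin d) :=
  WithLp.toLp 2 (fun i => (v i).re)

noncomputable def imPart {d : ℕ} (v : Fin d → ℂ) : EuclideanSpace ℝ (Fin d) :=
  WithLp.toLp 2 (fun i => (v i).im)

/-- Balanced convex hull of the finite family `v_1, …, v_N`. -/
def cob {d N : ℕ} (v : Fin N → (Fin d → ℂ)) : Set (Fin d → ℂ) :=
  {w | ∃ z : Fin N → ℂ, (∑ k, ‖z k‖) ≤ 1 ∧ w = ∑ k, z k • v k}

/-!
Writing `z = ‖z‖ exp (i arg z)`, the set `cob v` is the convex hull of the circles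
`{ζ • v k | ‖ζ‖ = 1}`; the slack `1 - ∑ ‖z k‖` is absorbed by `0`, the midpoint of `v 0` and
`-v 0`. The real part is `ℝ`-linear, so it commutes with convex hulls, and
`Re (ζ • v) = Re ζ • Re v - Im ζ • Im v` runs through the ellipse `E(v)` as `ζ` runs through
the unit circle.
-/

open Complex Set Metric

theorem Convex.sum_smul_mem_of_zero_mem {R E ι : Type*} [Field R] [LinearOrder R]
    [IsStrictOrderedRing R] [AddCommGroup E] [Module R E] {s : Set E} (hs : Convex R s)
    (h0 : (0 : E) ∈ s) {t : Finset ι} {w : ι → R} {z : ι → E} (hw₀ : ∀ i ∈ t, 0 ≤ w i)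
    (hw₁ : ∑ i ∈ t, w i ≤ 1) (hz : ∀ i ∈ t, z i ∈ s) : ∑ i ∈ t, w i • z i ∈ s := by
  rcases (Finset.sum_nonneg hw₀).eq_or_lt with hW | hW
  · have hw : ∀ i ∈ t, w i = 0 := (Finset.sum_eq_zero_iff_of_nonneg hw₀).1 hW.symm
    rwa [Finset.sum_eq_zero fun i hi => by simp [hw i hi]]
  · have hc := (hs.starConvex h0).smul_mem (hs.centerMass_mem hw₀ hW hz) hW.le hw₁
    rwa [Finset.centerMass, smul_inv_smul₀ hW.ne'] at hc

theorem convex_setOf_sum_norm_le {ι E : Type*} [Fintype ι] [SeminormedAddCommGroup E]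
    [NormedSpace ℝ E] (r : ℝ) : Convex ℝ {z : ι → E | ∑ i, ‖z i‖ ≤ r} := by
  intro x hx y hy a b ha hb hab
  calc ∑ i, ‖a • x i + b • y i‖
      ≤ ∑ i, (a * ‖x i‖ + b * ‖y i‖) := Finset.sum_le_sum fun i _ => by
        simpa [norm_smul, abs_of_nonneg ha, abs_of_nonneg hb] using norm_add_le (a • x i) (b • y i)
    _ = a * ∑ i, ‖x i‖ + b * ∑ i, ‖y i‖ := by
        rw [Finset.sum_add_distrib, Finset.mul_sum, Finset.mul_sum]
    _ ≤ a * r + b * r := by gcongr <;> assumption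
    _ = r := by rw [← add_mul, hab, one_mul]

theorem isLinearMap_rePart (d : ℕ) : IsLinearMap ℝ (rePart (d := d)) :=
  ⟨fun u w => by ext; simp [rePart], fun c u => by ext; simp [rePart]⟩

theorem rePart_smul {d : ℕ} (z : ℂ) (u : Fin d → ℂ) :
    rePart (z • u) = z.re • rePart u - z.im • imPart u := by
  ext; simp [rePart, imPart]

theorem ellipse_eq_image_sphere {d : ℕ} (u : Fin d → ℂ) :
    ellipse (rePart u) (imPart u) = (fun ζ : ℂ => rePart (ζ • u)) '' sphere 0 1 := by
  ext x
  constructor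
  · rintro ⟨t, rfl⟩
    refine ⟨exp ((-t : ℝ) * I), mem_sphere_zero_iff_norm.2 (norm_exp_ofReal_mul_I _), ?_⟩
    simp only [rePart_smul, exp_ofReal_mul_I_re, exp_ofReal_mul_I_im, Real.cos_neg,
      Real.sin_neg, neg_smul, sub_neg_eq_add]
  · rintro ⟨ζ, hζ, rfl⟩
    rw [mem_sphere_zero_iff_norm] at hζ
    refine ⟨-ζ.arg, ?_⟩
    change rePart (ζ • u) = _
    rw [rePart_smul, Real.cos_neg, Real.sin_neg, neg_smul, ← sub_eq_add_neg,
      ← norm_mul_cos_arg ζ, ← norm_mul_sin_arg ζ, hζ, one_mul, one_mul]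

theorem convex_cob {d N : ℕ} (v : Fin N → (Fin d → ℂ)) : Convex ℝ (cob v) := by
  have hlin : IsLinearMap ℝ (fun z : Fin N → ℂ => ∑ k, z k • v k) :=
    ⟨fun z w => by simp [add_smul, Finset.sum_add_distrib],
     fun c z => by simp [Finset.smul_sum, mul_smul, Complex.coe_smul]⟩
  have hcob : cob v = (fun z : Fin N → ℂ => ∑ k, z k • v k) '' {z | ∑ k, ‖z k‖ ≤ 1} := by
    ext w
    exact exists_congr fun z => and_congr_right fun _ => eq_comm
  rw [hcob]
  exact (convex_setOf_sum_norm_le 1).is_linear_image hlin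

theorem cob_eq_convexHull {d N : ℕ} (hN : 0 < N) (v : Fin N → (Fin d → ℂ)) :
    cob v = convexHull ℝ (⋃ k, (fun ζ : ℂ => ζ • v k) '' sphere 0 1) := by
  set S := ⋃ k, (fun ζ : ℂ => ζ • v k) '' sphere 0 1
  have hS : ∀ k (ζ : ℂ), ‖ζ‖ = 1 → ζ • v k ∈ convexHull ℝ S := fun k ζ hζ =>
    subset_convexHull ℝ S (mem_iUnion.2 ⟨k, ζ, mem_sphere_zero_iff_norm.2 hζ, rfl⟩)
  apply Subset.antisymm
  · rintro w ⟨z, hz, rfl⟩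
    have h0 : (0 : Fin d → ℂ) ∈ convexHull ℝ S := by
      convert convex_convexHull ℝ S (hS ⟨0, hN⟩ 1 (by simp)) (hS ⟨0, hN⟩ (-1) (by simp))
        (by norm_num : (0 : ℝ) ≤ 1 / 2) (by norm_num : (0 : ℝ) ≤ 1 / 2) (by norm_num) using 1
      module
    have hpolar : ∀ k, z k • v k = ‖z k‖ • (exp ((z k).arg * I) • v k) := fun k => by
      rw [← Complex.coe_smul, smul_smul, norm_mul_exp_arg_mul_I]
    simp_rw [hpolar]
    exact (convex_convexHull ℝ S).sum_smul_mem_of_zero_mem h0 (fun k _ => norm_nonneg _) hz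
      fun k _ => hS k _ (norm_exp_ofReal_mul_I _)
  · refine convexHull_min ?_ (convex_cob v)
    rintro _ ⟨_, ⟨k, rfl⟩, ζ, hζ, rfl⟩
    refine ⟨Pi.single k ζ, ?_, ?_⟩
    · simpa [Pi.single_apply, apply_ite norm] using hζ.le
    · simp [Pi.single_apply]

/-- The real part of the balanced convex hull `cob{v_1,…,v_N}` is the convex hull
of the ellipses `E(v_1), …, E(v_N)`. -/
theorem rePart_cob_eq_convexHull_ellipses {d N : ℕ} (hN : 0 < N)
    (v : Fin N → (Fin d → ℂ)) :
    rePart '' cob v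
      = convexHull ℝ (⋃ k, ellipse (rePart (v k)) (imPart (v k))) := by
  simp_rw [cob_eq_convexHull hN, (isLinearMap_rePart d).image_convexHull, image_iUnion,
    ellipse_eq_image_sphere, image_image]
end

section
/- Let E_0, ..., E_N be ellipses in ℝ^d with E_k = E(a_k, b_k), and P = co{E_1,...,E_N}. Then E_0 is NOT contained in P if and only if there exists x ∈ ℝ^d with ⟨x,a_0⟩² + ⟨x,b_0⟩² > ⟨x,a_k⟩² + ⟨x,b_k⟩² for all k = 1,...,N. -/
/-!
The support function of `E(a, b)` in direction `x` is `√(⟨x,a⟩² + ⟨x,b⟩²)`, and it is attained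
on the ellipse. By Carathéodory the hull of the compact set `E_1 ∪ ⋯ ∪ E_N` is compact, so a
point of `E_0` outside it is strictly separated from it by some `⟨x, ·⟩`; then the support
function of `E_0` at `x` exceeds those of `E_1, …, E_N`. Conversely, for such an `x` the
open half-space below the support value of `E_0` contains the hull but not the point of `E_0`
where `⟨x, ·⟩` is maximal.
-/

open Set Real

theorem exists_mem_stdSimplex_sum_smul_eq_of_mem_convexHull {𝕜 E : Type*} [Field 𝕜]
    [LinearOrder 𝕜] [IsStrictOrderedRing 𝕜] [AddCommGroup E] [Module 𝕜 E]
    [FiniteDimensional 𝕜 E] {s : Set E} {x : E} (hx : x ∈ convexHull 𝕜 s) :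
    ∃ w ∈ stdSimplex 𝕜 (Fin (Module.finrank 𝕜 E + 1)),
      ∃ z : Fin (Module.finrank 𝕜 E + 1) → E, (∀ i, z i ∈ s) ∧ ∑ i, w i • z i = x := by
  obtain ⟨ι, _, z, w, hzs, hind, hw_pos, hw_sum, hwz⟩ := eq_pos_convex_span_of_mem_convexHull hx
  obtain ⟨i₀⟩ : Nonempty ι := by
    by_contra h
    simp [not_nonempty_iff.mp h] at hw_sum
  -- Carathéodory gives at most `finrank + 1` points; pad them with zero weights.
  obtain ⟨e⟩ : Nonempty (ι ↪ Fin (Module.finrank 𝕜 E + 1)) :=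
    Function.Embedding.nonempty_of_card_le <| by
      simpa using hind.card_le_finrank_succ.trans (by gcongr; exact Submodule.finrank_le _)
  have extend_eq_zero : ∀ j ∉ range e, Function.extend e w 0 j = 0 := fun j hj =>
    Function.extend_apply' _ _ _ (by simpa using hj)
  refine ⟨Function.extend e w 0, ⟨fun j => ?_, ?_⟩, Function.extend e z fun _ => z i₀,
    fun j => ?_, ?_⟩
  · by_cases hj : j ∈ range e
    · obtain ⟨i, rfl⟩ := hj
      simpa [e.injective.extend_apply] using (hw_pos i).le
    · rw [extend_eq_zero j hj]
  · rw [← hw_sum]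
    exact (Fintype.sum_of_injective e e.injective _ _ extend_eq_zero
      fun i => (e.injective.extend_apply _ _ _).symm).symm
  · by_cases hj : j ∈ range e
    · obtain ⟨i, rfl⟩ := hj
      simpa [e.injective.extend_apply] using hzs (mem_range_self i)
    · simpa [Function.extend_apply' _ _ _ (by simpa using hj)] using hzs (mem_range_self i₀)
  · rw [← hwz]
    exact (Fintype.sum_of_injective e e.injective _ _
      (fun j hj => by simp [extend_eq_zero j hj])
      fun i => by simp [e.injective.extend_apply]).symm

theorem isCompact_convexHull {E : Type*} [NormedAddCommGroup E] [NormedSpace ℝ E]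
    [FiniteDimensional ℝ E] {s : Set E} (hs : IsCompact s) : IsCompact (convexHull ℝ s) := by
  set n := Module.finrank ℝ E + 1
  suffices convexHull ℝ s = (fun q : (Fin n → ℝ) × (Fin n → E) => ∑ i, q.1 i • q.2 i) ''
      (stdSimplex ℝ (Fin n) ×ˢ univ.pi fun _ => s) by
    rw [this]
    exact ((isCompact_stdSimplex ℝ _).prod (isCompact_univ_pi fun _ => hs)).image (by fun_prop)
  refine Subset.antisymm (fun x hx => ?_) ?_
  · obtain ⟨w, hw, z, hz, rfl⟩ := exists_mem_stdSimplex_sum_smul_eq_of_mem_convexHull hx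
    exact ⟨(w, z), ⟨hw, fun i _ => hz i⟩, rfl⟩
  · rintro _ ⟨⟨w, z⟩, ⟨hw, hz⟩, rfl⟩
    exact (convex_convexHull ℝ s).sum_mem (fun i _ => hw.1 i) hw.2
      fun i _ => subset_convexHull ℝ s (hz i (mem_univ i))

theorem notMem_convexHull_iff_exists_inner_lt {E : Type*} [NormedAddCommGroup E]
    [InnerProductSpace ℝ E] [FiniteDimensional ℝ E] {s : Set E} (hs : IsCompact s) {y : E} :
    y ∉ convexHull ℝ s ↔ ∃ x, ∀ p ∈ s, inner ℝ x p < inner ℝ x y := by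
  constructor
  · intro hy
    obtain ⟨f, u, hfu, huy⟩ :=
      geometric_hahn_banach_closed_point (convex_convexHull ℝ s)
        (isCompact_convexHull hs).isClosed hy
    refine ⟨(InnerProductSpace.toDual ℝ E).symm f, fun p hp => ?_⟩
    simp only [InnerProductSpace.toDual_symm_apply]
    exact (hfu p (subset_convexHull ℝ s hp)).trans huy
  · rintro ⟨x, hx⟩ hy
    have hull_sub : convexHull ℝ s ⊆ {p | inner ℝ x p < inner ℝ x y} :=
      convexHull_min hx (convex_halfSpace_lt (innerₛₗ ℝ x).isLinear _)
    exact lt_irrefl (inner ℝ x y) (hull_sub hy)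

theorem cos_mul_add_sin_mul_le_sqrt (t A B : ℝ) : cos t * A + sin t * B ≤ √(A ^ 2 + B ^ 2) :=
  (le_abs_self _).trans <| abs_le_sqrt <| by
    nlinarith [sin_sq_add_cos_sq t, sq_nonneg (cos t * B - sin t * A)]

theorem exists_cos_mul_add_sin_mul_eq_sqrt (A B : ℝ) :
    ∃ t, cos t * A + sin t * B = √(A ^ 2 + B ^ 2) := by
  set z : ℂ := ⟨A, B⟩
  refine ⟨Complex.arg z, ?_⟩
  have hA : ‖z‖ * cos (Complex.arg z) = A := Complex.norm_mul_cos_arg z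
  have hB : ‖z‖ * sin (Complex.arg z) = B := Complex.norm_mul_sin_arg z
  have hz : ‖z‖ = √(A ^ 2 + B ^ 2) := by
    rw [Complex.norm_def, Complex.normSq_mk, sq, sq]
  rw [← hz, ← hA, ← hB]
  linear_combination ‖z‖ * sin_sq_add_cos_sq (Complex.arg z)

theorem isCompact_ellipse {d : ℕ} (a b : EuclideanSpace ℝ (Fin d)) :
    IsCompact (ellipse a b) := by
  have hper : Function.Periodic (fun t : ℝ => cos t • a + sin t • b) (2 * π) := fun t => by
    simp only [cos_add_two_pi, sin_add_two_pi]
  convert hper.compact_of_continuous two_pi_pos.ne' (by fun_prop) using 1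
  ext p
  simp [ellipse, eq_comm]

theorem isGreatest_inner_ellipse {d : ℕ} (x a b : EuclideanSpace ℝ (Fin d)) :
    IsGreatest ((inner ℝ x ·) '' ellipse a b) √(inner ℝ x a ^ 2 + inner ℝ x b ^ 2) := by
  have inner_eq : ∀ t,
      inner ℝ x (cos t • a + sin t • b) = cos t * inner ℝ x a + sin t * inner ℝ x b := fun t => by
    simp only [inner_add_right, real_inner_smul_right]
  constructor
  · obtain ⟨t, ht⟩ := exists_cos_mul_add_sin_mul_eq_sqrt (inner ℝ x a) (inner ℝ x b)
    exact ⟨_, ⟨t, rfl⟩, (inner_eq t).trans ht⟩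
  · rintro _ ⟨_, ⟨t, rfl⟩, rfl⟩
    exact (inner_eq t).trans_le (cos_mul_add_sin_mul_le_sqrt t _ _)

/-- `E_0 ⊄ co{E_1,…,E_N}` iff there is `x` with
`⟨x,a_0⟩² + ⟨x,b_0⟩² > ⟨x,a_k⟩² + ⟨x,b_k⟩²` for all `k`. -/
theorem not_subset_iff_separating_functional {d N : ℕ}
    (a b : Fin N → EuclideanSpace ℝ (Fin d)) (a0 b0 : EuclideanSpace ℝ (Fin d)) :
    ¬ (ellipse a0 b0 ⊆ convexHull ℝ (⋃ k, ellipse (a k) (b k)))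
      ↔ ∃ x : EuclideanSpace ℝ (Fin d), ∀ k,
          (inner ℝ x (a k) : ℝ) ^ 2 + (inner ℝ x (b k) : ℝ) ^ 2
            < (inner ℝ x a0 : ℝ) ^ 2 + (inner ℝ x b0 : ℝ) ^ 2 := by
  have hS : IsCompact (⋃ k, ellipse (a k) (b k)) :=
    isCompact_iUnion fun k => isCompact_ellipse _ _
  simp only [not_subset, notMem_convexHull_iff_exists_inner_lt hS]
  constructor
  · rintro ⟨y, hy, x, hx⟩
    refine ⟨x, fun k => ?_⟩
    obtain ⟨p, hp, hpx⟩ := (isGreatest_inner_ellipse x (a k) (b k)).1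
    rw [← sqrt_lt_sqrt_iff (by positivity), ← hpx]
    exact (hx p (mem_iUnion.2 ⟨k, hp⟩)).trans_le
      ((isGreatest_inner_ellipse x a0 b0).2 ⟨y, hy, rfl⟩)
  · rintro ⟨x, hx⟩
    obtain ⟨y, hy, hyx⟩ := (isGreatest_inner_ellipse x a0 b0).1
    refine ⟨y, hy, x, fun p hp => ?_⟩
    obtain ⟨k, hp⟩ := mem_iUnion.1 hp
    calc inner ℝ x p ≤ √(inner ℝ x (a k) ^ 2 + inner ℝ x (b k) ^ 2) :=
          (isGreatest_inner_ellipse x (a k) (b k)).2 ⟨p, hp, rfl⟩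
      _ < √(inner ℝ x a0 ^ 2 + inner ℝ x b0 ^ 2) := sqrt_lt_sqrt (by positivity) (hx k)
      _ = inner ℝ x y := hyx.symm
end

section
/- Let t_1,...,t_N ≥ 0 and for each k let a_k, b_k ∈ ℝ² be collinear vectors with |a_k|² + |b_k|² ≤ 1. If Σ_k t_k a_k = t_0 e_1 and Σ_k t_k b_k = t_0 e_2 (where e_1, e_2 are the standard basis vectors of ℝ²) with t_0 ≥ 0, then Σ_k t_k ≥ 2 t_0. -/
/-!
The trace `a₀ + b₁` of the rank-one matrix with columns `a, b` is at most its Frobenius norm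
`√(|a|² + |b|²) ≤ 1`: by Cauchy–Schwarz, if `b = c a` then `(a₀ + c a₁)² ≤ (1 + c²) |a|²`.
Reading off the first coordinate of `Σ t_k a_k` and the second of `Σ t_k b_k` therefore gives
`2 t₀ = Σ t_k (a_k₀ + b_k₁) ≤ Σ t_k`.
-/

open Finset

lemma sq_add_mul_le_one_add_sq_mul (p q c : ℝ) :
    (p + c * q) ^ 2 ≤ (1 + c ^ 2) * (p ^ 2 + q ^ 2) := by
  nlinarith [sq_nonneg (q - c * p)]

lemma EuclideanSpace.real_norm_sq_eq_fin_two (x : EuclideanSpace ℝ (Fin 2)) :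
    ‖x‖ ^ 2 = x 0 ^ 2 + x 1 ^ 2 := by
  rw [EuclideanSpace.real_norm_sq_eq, Fin.sum_univ_two]

lemma sq_apply_zero_add_apply_one_le_of_collinear {x y : EuclideanSpace ℝ (Fin 2)}
    (h : (∃ c : ℝ, y = c • x) ∨ (∃ c : ℝ, x = c • y)) :
    (x 0 + y 1) ^ 2 ≤ ‖x‖ ^ 2 + ‖y‖ ^ 2 := by
  rcases h with ⟨c, rfl⟩ | ⟨c, rfl⟩
  · have := sq_add_mul_le_one_add_sq_mul (x 0) (x 1) c
    simp only [EuclideanSpace.real_norm_sq_eq_fin_two, PiLp.smul_apply, smul_eq_mul]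
    linarith
  · have := sq_add_mul_le_one_add_sq_mul (y 1) (y 0) c
    simp only [EuclideanSpace.real_norm_sq_eq_fin_two, PiLp.smul_apply, smul_eq_mul]
    linarith

lemma EuclideanSpace.sum_smul_apply {𝕜 ι n : Type*} [RCLike 𝕜] [Fintype n] (s : Finset ι)
    (t : ι → 𝕜) (v : ι → EuclideanSpace 𝕜 n) (i : n) :
    (∑ k ∈ s, t k • v k) i = ∑ k ∈ s, t k * v k i := by
  simp only [WithLp.ofLp_sum, Finset.sum_apply, PiLp.smul_apply, smul_eq_mul]

theorem sum_ge_two_t0_general {N : ℕ} (t : Fin N → ℝ) (t0 : ℝ)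
    (a b : Fin N → EuclideanSpace ℝ (Fin 2))
    (ht : ∀ k, 0 ≤ t k)
    (hcol : ∀ k, (∃ c : ℝ, b k = c • a k) ∨ (∃ c : ℝ, a k = c • b k))
    (hnorm : ∀ k, ‖a k‖ ^ 2 + ‖b k‖ ^ 2 ≤ 1)
    (ha : ∑ k, t k • a k = t0 • EuclideanSpace.single (0 : Fin 2) (1 : ℝ))
    (hb : ∑ k, t k • b k = t0 • EuclideanSpace.single (1 : Fin 2) (1 : ℝ)) :
    2 * t0 ≤ ∑ k, t k := by
  have ha0 : ∑ k, t k * a k 0 = t0 := by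
    simpa [EuclideanSpace.sum_smul_apply] using congrArg (· 0) ha
  have hb1 : ∑ k, t k * b k 1 = t0 := by
    simpa [EuclideanSpace.sum_smul_apply] using congrArg (· 1) hb
  have htrace (k : Fin N) : a k 0 + b k 1 ≤ 1 :=
    le_of_abs_le <| (sq_le_one_iff_abs_le_one _).mp <|
      (sq_apply_zero_add_apply_one_le_of_collinear (hcol k)).trans (hnorm k)
  calc 2 * t0 = ∑ k, t k * (a k 0 + b k 1) := by
        simp only [mul_add, sum_add_distrib, ha0, hb1]; ring
    _ ≤ ∑ k, t k * 1 := sum_le_sum fun k _ ↦ mul_le_mul_of_nonneg_left (htrace k) (ht k)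
    _ = ∑ k, t k := by simp only [mul_one]

/-- If `a_k, b_k ∈ ℝ²` are collinear with `|a_k|² + |b_k|² ≤ 1`, `t_k ≥ 0`,
`Σ t_k a_k = t₀ e₁` and `Σ t_k b_k = t₀ e₂`, then `Σ t_k ≥ 2 t₀`. -/
theorem sum_ge_two_t0 {N : ℕ} (t : Fin N → ℝ) (t0 : ℝ)
    (a b : Fin N → EuclideanSpace ℝ (Fin 2))
    (ht : ∀ k, 0 ≤ t k) (ht0 : 0 ≤ t0)
    (hcol : ∀ k, (∃ c : ℝ, b k = c • a k) ∨ (∃ c : ℝ, a k = c • b k))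
    (hnorm : ∀ k, ‖a k‖ ^ 2 + ‖b k‖ ^ 2 ≤ 1)
    (ha : ∑ k, t k • a k = t0 • EuclideanSpace.single (0 : Fin 2) (1 : ℝ))
    (hb : ∑ k, t k • b k = t0 • EuclideanSpace.single (1 : Fin 2) (1 : ℝ)) :
    2 * t0 ≤ ∑ k, t k :=
  sum_ge_two_t0_general t t0 a b ht hcol hnorm ha hb
end

section
/- Let O be a point on a side of a convex polygon in ℝ², different from the midpoint of that side. Then there exist affine symmetries about the line containing that side, arbitrarily close to the orthogonal symmetry, such that the distances from O to the images of all vertices of the polygon are pairwise distinct. -/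
/-!
The squared distance from `O` to the image of `v = (x, y)` under `(x, y) ↦ (x + a y, -y)` is a
quadratic polynomial in `a`. For two vertices these polynomials agree identically only if the
vertices have the same height `y`, and then (for `y > 0`) the same abscissa, or (for `y = 0`)
equal or opposite abscissas. Two distinct vertices of the polygon in the closed upper half plane
can only fail this way if they are the endpoints of the side and `O` is its midpoint. Hence each
pair of vertices is at equal distance from `O` for finitely many `a` only, and any other `a` near
`0` works.
-/

open Polynomial Set

theorem quadratic_coeffs_eq_zero_of_infinite {R : Type*} [CommRing R] [IsDomain R] {A B C : R}
    (h : {x | A * x ^ 2 + B * x + C = 0}.Infinite) : A = 0 ∧ B = 0 ∧ C = 0 := by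
  have hp : (Polynomial.C A * X ^ 2 + Polynomial.C B * X + Polynomial.C C : R[X]) = 0 :=
    eq_zero_of_infinite_isRoot _ (by simpa [IsRoot] using h)
  refine ⟨?_, ?_, ?_⟩
  · simpa using congrArg (coeff · 2) hp
  · simpa using congrArg (coeff · 1) hp
  · simpa using congrArg (coeff · 0) hp

/-- The squared distance from the origin to the image of `v` under `(x, y) ↦ (x + a y, -y)`. -/
def affineReflSqNorm (a : ℝ) (v : ℝ × ℝ) : ℝ := (v.1 + a * v.2) ^ 2 + v.2 ^ 2

theorem coeffs_eq_of_infinite_affineReflSqNorm_eq {v w : ℝ × ℝ}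
    (h : {a | affineReflSqNorm a v = affineReflSqNorm a w}.Infinite) :
    v.2 ^ 2 = w.2 ^ 2 ∧ v.1 * v.2 = w.1 * w.2 ∧ v.1 ^ 2 = w.1 ^ 2 := by
  have hquad := quadratic_coeffs_eq_zero_of_infinite (A := v.2 ^ 2 - w.2 ^ 2)
    (B := 2 * (v.1 * v.2 - w.1 * w.2)) (C := v.1 ^ 2 + v.2 ^ 2 - w.1 ^ 2 - w.2 ^ 2) <|
    h.mono fun a ha => by
      simp only [affineReflSqNorm, mem_ofPred_eq] at ha ⊢
      linear_combination ha
  obtain ⟨hA, hB, hC⟩ := hquad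
  exact ⟨by linear_combination hA, by linear_combination hB / 2, by linear_combination hC - hA⟩

theorem eq_or_axis_symmetric_of_infinite_affineReflSqNorm_eq {v w : ℝ × ℝ}
    (hv : 0 ≤ v.2) (hw : 0 ≤ w.2)
    (h : {a | affineReflSqNorm a v = affineReflSqNorm a w}.Infinite) :
    v = w ∨ (v.2 = 0 ∧ w.2 = 0 ∧ v.1 + w.1 = 0) := by
  obtain ⟨hy, hxy, hx⟩ := coeffs_eq_of_infinite_affineReflSqNorm_eq h
  have hy : v.2 = w.2 := (pow_left_inj₀ hv hw two_ne_zero).1 hy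
  rcases hv.lt_or_eq with hpos | hzero
  · left
    rw [hy] at hxy
    exact Prod.ext (mul_right_cancel₀ (hy ▸ hpos.ne') hxy) hy
  · rcases sq_eq_sq_iff_eq_or_eq_neg.1 hx with hx | hx
    · exact Or.inl (Prod.ext hx hy)
    · exact Or.inr ⟨hzero.symm, hy ▸ hzero.symm, by rw [hx]; ring⟩

theorem finite_setOf_not_injective {ι α β : Type*} [Finite ι] (f : ι → α → β)
    (h : ∀ i j, i ≠ j → {a | f i a = f j a}.Finite) :
    {a | ¬ Function.Injective fun i => f i a}.Finite := by
  refine (Set.finite_iUnion fun i => Set.finite_iUnion fun j =>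
    (Set.finite_iUnion fun (hij : i ≠ j) => h i j hij)).subset ?_
  intro a ha
  simp only [Function.Injective, not_forall] at ha
  obtain ⟨i, j, hij, hne⟩ := ha
  exact mem_iUnion.2 ⟨i, mem_iUnion.2 ⟨j, mem_iUnion.2 ⟨hne, hij⟩⟩⟩

theorem affine_symmetry_distinct_distances_general {m : ℕ} (V : Fin m → ℝ × ℝ)
    (hinj : Function.Injective V) (i0 i1 : Fin m)
    (h0 : (V i0).2 = 0) (h1 : (V i1).2 = 0)
    (hup : ∀ i, i ≠ i0 → i ≠ i1 → 0 < (V i).2)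
    (hmid : (V i0).1 + (V i1).1 ≠ 0) :
    ∀ ε > 0, ∃ a : ℝ, |a| < ε ∧
      Function.Injective
        (fun i => Real.sqrt (((V i).1 + a * (V i).2) ^ 2 + ((V i).2) ^ 2)) := by
  intro ε hε
  have haxis : ∀ i, (V i).2 = 0 → i = i0 ∨ i = i1 := fun i hi => by
    by_contra! h
    exact (hup i h.1 h.2).ne' hi
  have hnonneg : ∀ i, 0 ≤ (V i).2 := fun i => by
    by_cases hi : (V i).2 = 0
    · exact hi.ge
    · exact (hup i (fun h => hi (h ▸ h0)) (fun h => hi (h ▸ h1))).le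
  have hfinite : ∀ i j, i ≠ j →
      {a | affineReflSqNorm a (V i) = affineReflSqNorm a (V j)}.Finite := by
    intro i j hij
    by_contra hinf
    rcases eq_or_axis_symmetric_of_infinite_affineReflSqNorm_eq (hnonneg i) (hnonneg j) hinf with
      heq | ⟨hi, hj, hsum⟩
    · exact hij (hinj heq)
    · rcases haxis i hi with rfl | rfl <;> rcases haxis j hj with rfl | rfl
      · exact hij rfl
      · exact hmid hsum
      · exact hmid (by linarith)
      · exact hij rfl
  obtain ⟨a, ⟨hlo, hhi⟩, hgood⟩ := ((Ioo_infinite (neg_lt_self hε)).sdiff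
    (finite_setOf_not_injective (fun i a => affineReflSqNorm a (V i)) hfinite)).nonempty
  refine ⟨a, abs_lt.2 ⟨hlo, hhi⟩, fun i j hij => ?_⟩
  exact not_not.1 hgood ((Real.sqrt_inj (add_nonneg (sq_nonneg _) (sq_nonneg _))
    (add_nonneg (sq_nonneg _) (sq_nonneg _))).1 hij)

/-- Lemma on affine symmetries: with coordinates chosen so that `O` is the origin and the
side of the convex polygon lies on the abscissa (vertices `V i0`, `V i1` on the axis with
`O` strictly between them and not the midpoint, all other vertices strictly above the
axis), for every `ε > 0` there is an affine symmetry `(x,y) ↦ (x + a·y, −y)` with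
`|a| < ε` such that the distances from `O` to the images of the vertices are pairwise
distinct. -/
theorem affine_symmetry_distinct_distances {m : ℕ} (V : Fin m → ℝ × ℝ)
    (hinj : Function.Injective V) (i0 i1 : Fin m) (hne : i0 ≠ i1)
    (h0 : (V i0).2 = 0) (h1 : (V i1).2 = 0)
    (hleft : (V i0).1 < 0) (hright : 0 < (V i1).1)
    (hup : ∀ i, i ≠ i0 → i ≠ i1 → 0 < (V i).2)
    (hmid : (V i0).1 + (V i1).1 ≠ 0) :
    ∀ ε > 0, ∃ a : ℝ, |a| < ε ∧
      Function.Injective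
        (fun i => Real.sqrt (((V i).1 + a * (V i).2) ^ 2 + ((V i).2) ^ 2)) :=
  affine_symmetry_distinct_distances_general V hinj i0 i1 h0 h1 hup hmid
end

section
/- For α, β ∈ (−π/2, π/2) with α ≠ β, let T_0 = [[0,0,0],[−sin α, cos α, 0],[cos α, sin α, 0]] and T_1 = [[0, −sin β, cos β],[0, cos β, sin β],[0,0,0]]. Then the spectral radius of T_0 T_1 equals 1, i.e., ρ(T_0T_1)^{1/2} = 1. -/
open Matrix

/-! `T₀T₁` is `0 ⊕ R(α - β)` with `R(θ)` the plane rotation by `θ`, so its eigenvalues are `0` and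
`e^{± i(α - β)}` and its spectral radius is `|e^{i(α - β)}| = 1`. -/

namespace Complex

lemma spectrum_rotationBlock (c s : ℂ) :
    spectrum ℂ !![0, 0, 0; 0, c, -s; 0, s, c] = {0, c + s * I, c - s * I} := by
  ext k
  have hdet : (algebraMap ℂ (Matrix (Fin 3) (Fin 3) ℂ) k - !![0, 0, 0; 0, c, -s; 0, s, c]).det =
      k * ((k - (c + s * I)) * (k - (c - s * I))) := by
    rw [algebraMap_eq_diagonal, det_fin_three]
    simp
    linear_combination (k * s ^ 2) * I_sq
  simp only [spectrum.mem_iff, isUnit_iff_isUnit_det, isUnit_iff_ne_zero, not_not, hdet,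
    mul_eq_zero, sub_eq_zero, Set.mem_insert_iff, Set.mem_singleton_iff]

lemma spectralRadius_rotationBlock (θ : ℝ) :
    spectralRadius ℂ !![0, 0, 0; 0, cos θ, -sin θ; 0, sin θ, cos θ] = 1 := by
  have hconj : cos θ - sin θ * I = exp ((-θ : ℝ) * I) := by
    rw [exp_mul_I]
    push_cast
    rw [cos_neg, sin_neg]
    ring
  rw [spectralRadius, spectrum_rotationBlock, ← exp_mul_I, hconj, iSup_insert, iSup_insert,
    iSup_singleton, nnnorm_zero, nnnorm_exp_ofReal_mul_I, nnnorm_exp_ofReal_mul_I]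
  simp

end Complex

lemma map_T0_mul_T1 (α β : ℝ) :
    ((!![0, 0, 0; -Real.sin α, Real.cos α, 0; Real.cos α, Real.sin α, 0] *
        !![0, -Real.sin β, Real.cos β; 0, Real.cos β, Real.sin β; 0, 0, 0]).map Complex.ofReal :
        Matrix (Fin 3) (Fin 3) ℂ) =
      !![0, 0, 0; 0, Complex.cos ↑(α - β), -Complex.sin ↑(α - β);
        0, Complex.sin ↑(α - β), Complex.cos ↑(α - β)] := by
  ext i j
  fin_cases i <;> fin_cases j <;> simp [Complex.cos_sub, Complex.sin_sub] <;> ring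

theorem spectralRadius_T0T1_eq_one_general (α β : ℝ) :
    spectralRadius ℂ
      (((!![0, 0, 0; -Real.sin α, Real.cos α, 0; Real.cos α, Real.sin α, 0] *
          !![0, -Real.sin β, Real.cos β; 0, Real.cos β, Real.sin β; 0, 0, 0]).map
        (Complex.ofReal)) : Matrix (Fin 3) (Fin 3) ℂ) = 1 := by
  rw [map_T0_mul_T1]
  exact Complex.spectralRadius_rotationBlock _

/-- For `α ≠ β` in `(−π/2, π/2)`, the spectral radius of `T₀T₁` equals `1`. -/
theorem spectralRadius_T0T1_eq_one (α β : ℝ)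
    (hα : α ∈ Set.Ioo (-(Real.pi / 2)) (Real.pi / 2))
    (hβ : β ∈ Set.Ioo (-(Real.pi / 2)) (Real.pi / 2)) (hne : α ≠ β) :
    spectralRadius ℂ
      (((!![0, 0, 0; -Real.sin α, Real.cos α, 0; Real.cos α, Real.sin α, 0] *
          !![0, -Real.sin β, Real.cos β; 0, Real.cos β, Real.sin β; 0, 0, 0]).map
        (Complex.ofReal)) : Matrix (Fin 3) (Fin 3) ℂ) = 1 :=
  spectralRadius_T0T1_eq_one_general α β
end

section
/- Let E_1,...,E_N be ellipses in ℝ^d with E_j = E(a_j,b_j), P = co{E_1,...,E_N}, and w ∈ ℝ^d. Then the Minkowski functional ‖w‖_P equals the infimum of Σ_{j=1}^N sqrt(c_j² + s_j²) over all real numbers c_j, s_j satisfying Σ_{j=1}^N (c_j a_j + s_j b_j) = w. -/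
open Pointwise

section Coefficients

variable {ι E : Type*} [Fintype ι] [AddCommGroup E] [Module ℝ E]

def ellipseComb (a b : ι → E) (c s : ι → ℝ) : E := ∑ j, (c j • a j + s j • b j)

noncomputable def ellipseCost (c s : ι → ℝ) : ℝ := ∑ j, Real.sqrt (c j ^ 2 + s j ^ 2)

theorem ellipseComb_add (a b : ι → E) (c₁ s₁ c₂ s₂ : ι → ℝ) :
    ellipseComb a b (c₁ + c₂) (s₁ + s₂) = ellipseComb a b c₁ s₁ + ellipseComb a b c₂ s₂ := by
  simp only [ellipseComb, ← Finset.sum_add_distrib, Pi.add_apply, add_smul]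
  exact Finset.sum_congr rfl fun _ _ => by abel

theorem ellipseComb_smul (a b : ι → E) (r : ℝ) (c s : ι → ℝ) :
    ellipseComb a b (r • c) (r • s) = r • ellipseComb a b c s := by
  simp only [ellipseComb, Finset.smul_sum, smul_add, Pi.smul_apply, smul_eq_mul, mul_smul]

theorem ellipseComb_single [DecidableEq ι] (a b : ι → E) (j : ι) (x y : ℝ) :
    ellipseComb a b (Pi.single j x) (Pi.single j y) = x • a j + y • b j := by
  rw [ellipseComb, Finset.sum_eq_single j (fun i _ hi => by simp [hi]) (by simp)]
  simp

theorem ellipseCost_eq_sum_norm (c s : ι → ℝ) :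
    ellipseCost c s = ∑ j, ‖(c j : ℂ) + s j * Complex.I‖ := by
  simp only [ellipseCost, Complex.norm_add_mul_I]

theorem ellipseCost_nonneg (c s : ι → ℝ) : 0 ≤ ellipseCost c s :=
  Finset.sum_nonneg fun _ _ => Real.sqrt_nonneg _

theorem ellipseCost_add_le (c₁ s₁ c₂ s₂ : ι → ℝ) :
    ellipseCost (c₁ + c₂) (s₁ + s₂) ≤ ellipseCost c₁ s₁ + ellipseCost c₂ s₂ := by
  simp only [ellipseCost_eq_sum_norm, ← Finset.sum_add_distrib]
  refine Finset.sum_le_sum fun j _ => ?_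
  have hj : ((c₁ + c₂) j : ℂ) + (s₁ + s₂) j * Complex.I
      = ((c₁ j : ℂ) + s₁ j * Complex.I) + ((c₂ j : ℂ) + s₂ j * Complex.I) := by
    simp only [Pi.add_apply, Complex.ofReal_add]
    ring
  exact hj ▸ norm_add_le _ _

theorem ellipseCost_smul {r : ℝ} (hr : 0 ≤ r) (c s : ι → ℝ) :
    ellipseCost (r • c) (r • s) = r * ellipseCost c s := by
  simp only [ellipseCost_eq_sum_norm, Finset.mul_sum]
  refine Finset.sum_congr rfl fun j _ => ?_
  have hj : ((r • c) j : ℂ) + (r • s) j * Complex.I = r * ((c j : ℂ) + s j * Complex.I) := by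
    simp only [Pi.smul_apply, smul_eq_mul, Complex.ofReal_mul]
    ring
  rw [hj, norm_mul, Complex.norm_real, Real.norm_of_nonneg hr]

theorem ellipseCost_single [DecidableEq ι] (j : ι) (x y : ℝ) :
    ellipseCost (Pi.single j x) (Pi.single j y) = Real.sqrt (x ^ 2 + y ^ 2) := by
  rw [ellipseCost, Finset.sum_eq_single j (fun i _ hi => by simp [hi]) (by simp)]
  simp

theorem ellipseComb_eq_zero_of_ellipseCost_eq_zero (a b : ι → E) {c s : ι → ℝ}
    (h : ellipseCost c s = 0) : ellipseComb a b c s = 0 := by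
  refine Finset.sum_eq_zero fun j _ => ?_
  rw [ellipseCost_eq_sum_norm] at h
  have hj := (Finset.sum_eq_zero_iff_of_nonneg fun _ _ => norm_nonneg _).1 h j (Finset.mem_univ j)
  obtain ⟨hc, hs⟩ : c j = 0 ∧ s j = 0 := by simpa [Complex.ext_iff] using hj
  rw [hc, hs, zero_smul, zero_smul, add_zero]

theorem convex_ellipseComb_ellipseCost_le_one (a b : ι → E) :
    Convex ℝ {v | ∃ c s, ellipseComb a b c s = v ∧ ellipseCost c s ≤ 1} := by
  rintro _ ⟨c₁, s₁, rfl, h₁⟩ _ ⟨c₂, s₂, rfl, h₂⟩ θ₁ θ₂ hθ₁ hθ₂ hθ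
  refine ⟨θ₁ • c₁ + θ₂ • c₂, θ₁ • s₁ + θ₂ • s₂, ?_, ?_⟩
  · rw [ellipseComb_add, ellipseComb_smul, ellipseComb_smul]
  · calc ellipseCost (θ₁ • c₁ + θ₂ • c₂) (θ₁ • s₁ + θ₂ • s₂)
        ≤ θ₁ * ellipseCost c₁ s₁ + θ₂ * ellipseCost c₂ s₂ := by
          rw [← ellipseCost_smul hθ₁, ← ellipseCost_smul hθ₂]
          exact ellipseCost_add_le _ _ _ _
      _ ≤ θ₁ * 1 + θ₂ * 1 := by gcongr
      _ = 1 := by rw [mul_one, mul_one, hθ]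

end Coefficients

theorem exists_mem_ellipse_smul_eq {d : ℕ} (a b : EuclideanSpace ℝ (Fin d)) (c s : ℝ) :
    ∃ x ∈ ellipse a b, Real.sqrt (c ^ 2 + s ^ 2) • x = c • a + s • b := by
  refine ⟨_, ⟨Complex.arg (c + s * Complex.I), rfl⟩, ?_⟩
  rw [smul_add, smul_smul, smul_smul, ← Complex.norm_add_mul_I, Complex.norm_mul_cos_arg,
    Complex.norm_mul_sin_arg]
  simp

section ConvexHull

variable {ι : Type*} [Fintype ι] {d : ℕ} (a b : ι → EuclideanSpace ℝ (Fin d))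

theorem ellipse_subset_ellipseComb_ellipseCost_le_one (j : ι) :
    ellipse (a j) (b j) ⊆ {v | ∃ c s, ellipseComb a b c s = v ∧ ellipseCost c s ≤ 1} := by
  classical
  rintro _ ⟨t, rfl⟩
  refine ⟨Pi.single j (Real.cos t), Pi.single j (Real.sin t), ellipseComb_single a b j _ _, ?_⟩
  rw [ellipseCost_single, add_comm, Real.sin_sq_add_cos_sq, Real.sqrt_one]

theorem exists_ellipseComb_eq_of_mem_convexHull {v : EuclideanSpace ℝ (Fin d)}
    (hv : v ∈ convexHull ℝ (⋃ j, ellipse (a j) (b j))) :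
    ∃ c s, ellipseComb a b c s = v ∧ ellipseCost c s ≤ 1 :=
  convexHull_min (Set.iUnion_subset (ellipse_subset_ellipseComb_ellipseCost_le_one a b))
    (convex_ellipseComb_ellipseCost_le_one a b) hv

theorem exists_ellipseComb_eq_of_mem_smul_convexHull {r : ℝ} (hr : 0 ≤ r)
    {w : EuclideanSpace ℝ (Fin d)} (hw : w ∈ r • convexHull ℝ (⋃ j, ellipse (a j) (b j))) :
    ∃ c s, ellipseComb a b c s = w ∧ ellipseCost c s ≤ r := by
  obtain ⟨v, hv, rfl⟩ := hw
  obtain ⟨c, s, rfl, hcs⟩ := exists_ellipseComb_eq_of_mem_convexHull a b hv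
  refine ⟨r • c, r • s, ellipseComb_smul a b r c s, ?_⟩
  rw [ellipseCost_smul hr]
  exact mul_le_of_le_one_right hr hcs

theorem ellipseComb_mem_smul_convexHull {c s : ι → ℝ} (h : 0 < ellipseCost c s) :
    ellipseComb a b c s ∈ ellipseCost c s • convexHull ℝ (⋃ j, ellipse (a j) (b j)) := by
  choose x hx hxcs using fun j => exists_mem_ellipse_smul_eq (a j) (b j) (c j) (s j)
  have hcomb : ellipseComb a b c s = ellipseCost c s •
      Finset.univ.centerMass (fun j => Real.sqrt (c j ^ 2 + s j ^ 2)) x := by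
    rw [Finset.centerMass]
    change _ = ellipseCost c s • (ellipseCost c s)⁻¹ • _
    rw [smul_inv_smul₀ h.ne']
    simp only [ellipseComb, hxcs]
  rw [hcomb]
  exact Set.smul_mem_smul_set (Finset.centerMass_mem_convexHull _
    (fun j _ => Real.sqrt_nonneg _) h fun j _ => Set.mem_iUnion.2 ⟨j, hx j⟩)

theorem gauge_convexHull_ellipse_le_ellipseCost (c s : ι → ℝ) :
    gauge (convexHull ℝ (⋃ j, ellipse (a j) (b j))) (ellipseComb a b c s) ≤ ellipseCost c s := by
  rcases (ellipseCost_nonneg c s).eq_or_lt with h | h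
  · rw [ellipseComb_eq_zero_of_ellipseCost_eq_zero a b h.symm, gauge_zero, ← h]
  · exact gauge_le_of_mem h.le (ellipseComb_mem_smul_convexHull a b h)

end ConvexHull

/-- The Minkowski functional of `P = co{E_1,…,E_N}` at `w` equals the infimum of
`Σ_j sqrt(c_j² + s_j²)` over all reals `c_j, s_j` with `Σ_j (c_j a_j + s_j b_j) = w`. -/
theorem gauge_eq_inf_sum_sqrt {d N : ℕ}
    (a b : Fin N → EuclideanSpace ℝ (Fin d)) (w : EuclideanSpace ℝ (Fin d))
    (hw : ∃ c s : Fin N → ℝ, ∑ j, (c j • a j + s j • b j) = w) :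
    gauge (convexHull ℝ (⋃ j, ellipse (a j) (b j))) w
      = sInf {r : ℝ | ∃ c s : Fin N → ℝ,
          (∑ j, (c j • a j + s j • b j) = w) ∧
          r = ∑ j, Real.sqrt ((c j) ^ 2 + (s j) ^ 2)} := by
  change _ = sInf {r | ∃ c s, ellipseComb a b c s = w ∧ r = ellipseCost c s}
  obtain ⟨c₀, s₀, h₀⟩ := hw
  have hbdd : BddBelow {r | ∃ c s, ellipseComb a b c s = w ∧ r = ellipseCost c s} :=
    ⟨0, by rintro _ ⟨c, s, -, rfl⟩; exact ellipseCost_nonneg c s⟩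
  refine le_antisymm (le_csInf ⟨_, c₀, s₀, h₀, rfl⟩ ?_) ?_
  · rintro _ ⟨c, s, rfl, rfl⟩
    exact gauge_convexHull_ellipse_le_ellipseCost a b c s
  rw [gauge_def]
  rcases Set.eq_empty_or_nonempty {r ∈ Set.Ioi (0 : ℝ) |
      w ∈ r • convexHull ℝ (⋃ j, ellipse (a j) (b j))} with hempty | hne
  · -- the gauge takes its junk value `sInf ∅ = 0`, but then `w` has a representation of cost `0`
    have hcost : 0 = ellipseCost c₀ s₀ :=
      (ellipseCost_nonneg c₀ s₀).eq_or_lt.resolve_right fun hpos =>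
        hempty.subset ⟨hpos, h₀ ▸ ellipseComb_mem_smul_convexHull a b hpos⟩
    rw [hempty, Real.sInf_empty]
    exact csInf_le hbdd ⟨c₀, s₀, h₀, hcost⟩
  · refine le_csInf hne fun r ⟨hr, hwr⟩ => ?_
    obtain ⟨c, s, hcs, hle⟩ := exists_ellipseComb_eq_of_mem_smul_convexHull a b hr.le hwr
    exact (csInf_le hbdd ⟨c, s, hcs, rfl⟩).trans hle
end
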